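/- Let X be a chain and let α and β be orientation-preserving partial transformations of X. Then the composition αβ (α applied first, then β) is an orientation-preserving partial transformation of X. Consequently, the set POP(X) of all orientation-preserving partial transformations of X is a submonoid of the monoid of all partial transformations of X, and the set OP(X) of all orientation-preserving full transformations of X is a submonoid of the monoid of all full transformations of X. -/

import Mathlib

variable {X : Type*}

/-- The partial transformation `f` is order-preserving on the subset `A` of its domain. -/
def IsOrdOn [LinearOrder X] (f : X →. X) (A : Set X) : Prop :=
  ∀ ⦃x y u v : X⦄, x ∈ A → y ∈ A → x ≤ y → u ∈ f x → v ∈ f y → u ≤ v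

/-- `Y` is an ideal of the partial transformation `f`: a nonempty subset of the domain such
that `f` is order-preserving on `Y` and on `Dom f \ Y`, and every element of `Y` is below every
element of `Dom f \ Y` while its image is above. -/
def IsIdeal [LinearOrder X] (f : X →. X) (Y : Set X) : Prop :=
  Y.Nonempty ∧ Y ⊆ f.Dom ∧ IsOrdOn f Y ∧ IsOrdOn f (f.Dom \ Y) ∧
    ∀ ⦃a b u v : X⦄, a ∈ Y → b ∈ f.Dom \ Y → u ∈ f a → v ∈ f b → a ≤ b ∧ v ≤ u

/-- `f` is an orientation-preserving partial transformation: it is the empty transformation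
or it admits an ideal. -/
def IsOP [LinearOrder X] (f : X →. X) : Prop :=
  f.Dom = ∅ ∨ ∃ Y : Set X, IsIdeal f Y

variable {X : Type*}

/-- The full transformation `f` is order-preserving on the subset `A`. -/
def OrdOn [LinearOrder X] (f : X → X) (A : Set X) : Prop :=
  ∀ ⦃x y : X⦄, x ∈ A → y ∈ A → x ≤ y → f x ≤ f y

/-- `Y` is an ideal of the full transformation `f`. -/
def IsIdealFull [LinearOrder X] (f : X → X) (Y : Set X) : Prop :=
  Y.Nonempty ∧ OrdOn f Y ∧ OrdOn f Yᶜ ∧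
    ∀ ⦃a b : X⦄, a ∈ Y → b ∈ Yᶜ → a ≤ b ∧ f b ≤ f a

/-- `f` is an orientation-preserving full transformation. -/
def IsOPFull [LinearOrder X] (f : X → X) : Prop := ∃ Y : Set X, IsIdealFull f Y

/-!
An orientation-preserving map is one that is monotone for a rotation of the order on its domain:
the points of `Dom \ Y` first, then those of `Y`, both blocks in their natural order. For `β ∘ α`
with ideals `Y` of `α` and `Z` of `β`, the points whose `α`-image lies in `Z` form an initial
segment `I` of the domain rotated at `Y`, and `β ∘ α` is monotone for the domain rotated first at
`Y` and then at `I`. A rotation of a rotation of a chain is again a rotation, which gives the ideal.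
-/

lemma PFun.mem_comp_iff {α β γ : Type*} {f : β →. γ} {g : α →. β} {a : α} {c : γ} :
    c ∈ f.comp g a ↔ ∃ b ∈ g a, c ∈ f b :=
  Part.mem_bind_iff

lemma PFun.mem_dom_comp_iff {α β γ : Type*} {f : β →. γ} {g : α →. β} {a : α} :
    a ∈ (f.comp g).Dom ↔ ∃ b ∈ f.Dom, b ∈ g a := by
  rw [PFun.dom_comp, PFun.mem_preimage]

def Rotated (r : X → X → Prop) (S : Set X) (x y : X) : Prop :=
  (x ∉ S ∧ y ∈ S) ∨ ((x ∈ S ↔ y ∈ S) ∧ r x y)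

lemma rotated_iff_of_mem_iff {r : X → X → Prop} {S : Set X} {x y : X} (h : x ∈ S ↔ y ∈ S) :
    Rotated r S x y ↔ r x y := by
  simp [Rotated, h]

section Rotation

variable [LinearOrder X]

/-- Unlike an ideal, `Y` may be empty here, so that the empty transformation is covered too. -/
def IsRotatedMonotone (f : X →. X) (Y : Set X) : Prop :=
  (∀ ⦃a b⦄, a ∈ f.Dom → b ∈ f.Dom → a ∈ Y → b ∉ Y → a ≤ b) ∧
    ∀ ⦃x y u v⦄, Rotated (· ≤ ·) Y x y → u ∈ f x → v ∈ f y → u ≤ v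

lemma exists_rotated_imp_rotated_rotated {D Y I : Set X}
    (hY : ∀ ⦃a b⦄, a ∈ D → b ∈ D → a ∈ Y → b ∉ Y → a ≤ b)
    (hI : ∀ ⦃x y⦄, x ∈ D → y ∈ D → y ∈ I → Rotated (· ≤ ·) Y x y → x ∈ I) :
    ∃ W : Set X, (∀ ⦃a b⦄, a ∈ D → b ∈ D → a ∈ W → b ∉ W → a ≤ b) ∧
      ∀ ⦃x y⦄, x ∈ D → y ∈ D → Rotated (· ≤ ·) W x y → Rotated (Rotated (· ≤ ·) Y) I x y := by
  by_cases hIY : ∃ a ∈ D, a ∈ I ∧ a ∈ Y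
  · obtain ⟨a₀, ha₀D, ha₀I, ha₀Y⟩ := hIY
    have hcompl : ∀ ⦃b⦄, b ∈ D → b ∉ Y → b ∈ I := fun b hb hbY =>
      hI hb ha₀D ha₀I (Or.inl ⟨hbY, ha₀Y⟩)
    refine ⟨I ∩ Y, fun a b ha hb haW hbW => ?_, fun x y hx hy hxy => ?_⟩
    · by_contra! hba
      by_cases hbY : b ∈ Y
      · exact hbW ⟨hI hb ha haW.1 (Or.inr ⟨iff_of_true hbY haW.2, hba.le⟩), hbY⟩
      · exact hba.not_ge (hY ha hb haW.2 hbY)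
    · have := hY hx hy; have := hY hy hx; have := hcompl hx; have := hcompl hy
      unfold Rotated at *
      simp only [Set.mem_inter_iff] at hxy
      grind
  · push Not at hIY
    refine ⟨Y ∪ I, fun a b ha hb haW hbW => ?_, fun x y hx hy hxy => ?_⟩
    · simp only [Set.mem_union, not_or] at hbW
      by_contra! hba
      rcases haW with haY | haI
      · exact hba.not_ge (hY ha hb haY hbW.1)
      · exact hbW.2 (hI hb ha haI (Or.inr ⟨iff_of_false hbW.1 (hIY a ha haI), hba.le⟩))
    · have := hY hx hy; have := hY hy hx; have := hIY x hx; have := hIY y hy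
      unfold Rotated at *
      simp only [Set.mem_union] at hxy
      grind

variable {f : X →. X} {Y : Set X}

lemma isIdeal_iff_isRotatedMonotone :
    IsIdeal f Y ↔ Y.Nonempty ∧ Y ⊆ f.Dom ∧ IsRotatedMonotone f Y := by
  constructor
  · rintro ⟨hne, hsub, hY, hYc, hcross⟩
    refine ⟨hne, hsub, fun a b ha hb haY hbY => ?_, fun x y u v hxy hu hv => ?_⟩
    · obtain ⟨u, hu⟩ := (f.mem_dom a).1 ha
      obtain ⟨v, hv⟩ := (f.mem_dom b).1 hb
      exact (hcross haY ⟨hb, hbY⟩ hu hv).1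
    · have hx : x ∈ f.Dom := (f.mem_dom x).2 ⟨u, hu⟩
      have hy : y ∈ f.Dom := (f.mem_dom y).2 ⟨v, hv⟩
      rcases hxy with ⟨hxY, hyY⟩ | ⟨hxyY, hxy⟩
      · exact (hcross hyY ⟨hx, hxY⟩ hv hu).2
      · by_cases hxY : x ∈ Y
        · exact hY hxY (hxyY.1 hxY) hxy hu hv
        · exact hYc ⟨hx, hxY⟩ ⟨hy, mt hxyY.2 hxY⟩ hxy hu hv
  · rintro ⟨hne, hsub, hlower, hmono⟩
    refine ⟨hne, hsub, fun x y u v hx hy hxy => hmono (Or.inr ⟨iff_of_true hx hy, hxy⟩),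
      fun x y u v hx hy hxy => hmono (Or.inr ⟨iff_of_false hx.2 hy.2, hxy⟩),
      fun a b u v ha hb hu hv => ⟨hlower (hsub ha) hb.1 ha hb.2, hmono (Or.inl ⟨hb.2, ha⟩) hv hu⟩⟩

lemma IsRotatedMonotone.inter_dom (h : IsRotatedMonotone f Y) :
    IsRotatedMonotone f (Y ∩ f.Dom) := by
  refine ⟨fun a b ha hb haY hbY => h.1 ha hb haY.1 fun hb' => hbY ⟨hb', hb⟩,
    fun x y u v hxy hu hv => h.2 ?_ hu hv⟩
  have hx : x ∈ f.Dom := (f.mem_dom x).2 ⟨u, hu⟩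
  have hy : y ∈ f.Dom := (f.mem_dom y).2 ⟨v, hv⟩
  simpa [Rotated, hx, hy] using hxy

lemma isOP_iff_exists_isRotatedMonotone : IsOP f ↔ ∃ Y, IsRotatedMonotone f Y := by
  constructor
  · rintro (hD | ⟨Y, hY⟩)
    · refine ⟨∅, fun a _ ha => by simp [hD] at ha, fun x _ u _ _ hu => ?_⟩
      exact absurd ((f.mem_dom x).2 ⟨u, hu⟩) (hD ▸ Set.notMem_empty x)
    · exact ⟨Y, (isIdeal_iff_isRotatedMonotone.1 hY).2.2⟩
  · rintro ⟨Y, hY⟩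
    rcases (Y ∩ f.Dom).eq_empty_or_nonempty with hYD | hYD
    · rcases f.Dom.eq_empty_or_nonempty with hD | hD
      · exact Or.inl hD
      have hY' : ∀ ⦃x⦄, x ∈ f.Dom → x ∉ Y := fun x hx hxY => hYD.subset ⟨hxY, hx⟩
      refine Or.inr ⟨f.Dom, isIdeal_iff_isRotatedMonotone.2 ⟨hD, subset_rfl,
        fun a b _ hb _ hb' => absurd hb hb', fun x y u v hxy hu hv => hY.2 ?_ hu hv⟩⟩
      have hx : x ∈ f.Dom := (f.mem_dom x).2 ⟨u, hu⟩
      have hy : y ∈ f.Dom := (f.mem_dom y).2 ⟨v, hv⟩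
      rw [rotated_iff_of_mem_iff (iff_of_true hx hy)] at hxy
      exact (rotated_iff_of_mem_iff (iff_of_false (hY' hx) (hY' hy))).2 hxy
    · exact Or.inr ⟨_, isIdeal_iff_isRotatedMonotone.2
        ⟨hYD, Set.inter_subset_right, hY.inter_dom⟩⟩

lemma IsRotatedMonotone.comp {α β : X →. X} {Z : Set X} (hα : IsRotatedMonotone α Y)
    (hβ : IsRotatedMonotone β Z) : ∃ W, IsRotatedMonotone (β.comp α) W := by
  set I := {x | ∃ u ∈ α x, u ∈ Z}
  have mem_I : ∀ ⦃x u⦄, u ∈ α x → (x ∈ I ↔ u ∈ Z) := fun x u hu =>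
    ⟨fun ⟨u', hu', hu'Z⟩ => Part.mem_unique hu' hu ▸ hu'Z, fun huZ => ⟨u, hu, huZ⟩⟩
  have hmono : ∀ ⦃x y u v w z⦄, Rotated (Rotated (· ≤ ·) Y) I x y → u ∈ α x → v ∈ α y →
      w ∈ β u → z ∈ β v → w ≤ z := by
    intro x y u v w z hxy hu hv hw hz
    refine hβ.2 ?_ hw hz
    rw [Rotated, mem_I hu, mem_I hv] at hxy
    exact hxy.imp_right fun h => ⟨h.1, hα.2 h.2 hu hv⟩
  have hinitial : ∀ ⦃x y⦄, x ∈ (β.comp α).Dom → y ∈ (β.comp α).Dom → y ∈ I →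
      Rotated (· ≤ ·) Y x y → x ∈ I := by
    intro x y hx hy hyI hxy
    obtain ⟨u, huD, hu⟩ := PFun.mem_dom_comp_iff.1 hx
    obtain ⟨v, hvD, hv⟩ := PFun.mem_dom_comp_iff.1 hy
    rw [mem_I hv] at hyI
    rw [mem_I hu]
    by_contra huZ
    exact huZ (le_antisymm (hα.2 hxy hu hv) (hβ.1 hvD huD hyI huZ) ▸ hyI)
  have hdom : (β.comp α).Dom ⊆ α.Dom := PFun.dom_comp β α ▸ α.preimage_subset_dom _
  obtain ⟨W, hWlower, hW⟩ :=
    exists_rotated_imp_rotated_rotated (fun a b ha hb => hα.1 (hdom ha) (hdom hb)) hinitial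
  refine ⟨W, hWlower, fun x y w z hxy hw hz => ?_⟩
  obtain ⟨u, hu, hw'⟩ := PFun.mem_comp_iff.1 hw
  obtain ⟨v, hv, hz'⟩ := PFun.mem_comp_iff.1 hz
  exact hmono (hW ((PFun.mem_dom _ x).2 ⟨w, hw⟩) ((PFun.mem_dom _ y).2 ⟨z, hz⟩) hxy) hu hv hw' hz'

lemma IsOP.comp {α β : X →. X} (hα : IsOP α) (hβ : IsOP β) : IsOP (β.comp α) := by
  obtain ⟨Y, hY⟩ := isOP_iff_exists_isRotatedMonotone.1 hα
  obtain ⟨Z, hZ⟩ := isOP_iff_exists_isRotatedMonotone.1 hβ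
  exact isOP_iff_exists_isRotatedMonotone.2 (hY.comp hZ)

lemma isOP_id : IsOP (PFun.id X) := by
  refine isOP_iff_exists_isRotatedMonotone.2 ⟨∅, fun a _ _ _ ha => absurd ha (Set.notMem_empty a),
    fun x y u v hxy hu hv => ?_⟩
  rw [PFun.id_apply, Part.mem_some_iff] at hu hv
  rw [rotated_iff_of_mem_iff (iff_of_false (Set.notMem_empty x) (Set.notMem_empty y))] at hxy
  exact hu ▸ hv ▸ hxy

lemma isIdeal_coe_iff {f : X → X} : IsIdeal (f : X →. X) Y ↔ IsIdealFull f Y := by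
  simp only [IsIdeal, IsIdealFull, IsOrdOn, OrdOn, PFun.coe_val, Part.mem_some_iff, PFun.dom_coe,
    Set.subset_univ, Set.mem_sdiff, Set.mem_univ, Set.mem_compl_iff, true_and]
  refine and_congr_right fun _ => ⟨fun ⟨h₁, h₂, h₃⟩ => ⟨fun x y hx hy hxy => h₁ hx hy hxy rfl rfl,
    fun x y hx hy hxy => h₂ hx hy hxy rfl rfl, fun a b ha hb => h₃ ha hb rfl rfl⟩, ?_⟩
  rintro ⟨h₁, h₂, h₃⟩
  exact ⟨fun x y _ _ hx hy hxy hu hv => hu ▸ hv ▸ h₁ hx hy hxy,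
    fun x y _ _ hx hy hxy hu hv => hu ▸ hv ▸ h₂ hx hy hxy,
    fun a b _ _ ha hb hu hv => hu ▸ hv ▸ h₃ ha hb⟩

lemma isOPFull_iff_isOP_coe [Nonempty X] {f : X → X} : IsOPFull f ↔ IsOP (f : X →. X) := by
  simp [IsOPFull, IsOP, PFun.dom_coe, isIdeal_coe_iff]

end Rotation

theorem stmt0 (X : Type*) [LinearOrder X] [Nonempty X] :
    (∀ α β : X →. X, IsOP α → IsOP β → IsOP (β.comp α)) ∧
    IsOP (PFun.id X) ∧
    (∀ α β : X → X, IsOPFull α → IsOPFull β → IsOPFull (β ∘ α)) ∧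
    IsOPFull (id : X → X) := by
  refine ⟨fun α β hα hβ => hα.comp hβ, isOP_id, fun α β hα hβ => ?_, ?_⟩
  · rw [isOPFull_iff_isOP_coe] at *
    rw [PFun.coe_comp]
    exact hα.comp hβ
  · rw [isOPFull_iff_isOP_coe, PFun.coe_id]
    exact isOP_id
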